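/- arXiv:1003.1087 — 2 statements merged into one kernel-verified Lean document; each statement's English description precedes it below -/
import Mathlib

section
/- For integers $N \geq 1$ and $k$ with $1 \leq |k| \leq N$, we have $\sum_{n=1}^{N} n\sin\left(\frac{nk\pi}{N+1}\right)\sin\left(\frac{(n-1)k\pi}{N+1}\right) = \frac{(N+1)(N+2)}{4}\cos\left(\frac{k\pi}{N+1}\right)$. -/
open Real Finset

private lemma cos2' (y : ℝ) : Real.cos (2*y) = 1 - 2 * Real.sin y ^ 2 := by
  have h := Real.sin_sq_add_cos_sq y
  rw [Real.cos_two_mul]; linarith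

private lemma step (θ x : ℝ) :
    (Real.cos θ*Real.sin θ^2*(x+1)*(x+2) - ((x+1)+1/2)*Real.sin θ*Real.sin (2*(x+1)*θ)
      - Real.cos θ/2*Real.cos (2*(x+1)*θ))
    - (Real.cos θ*Real.sin θ^2*x*(x+1) - (x+1/2)*Real.sin θ*Real.sin (2*x*θ)
      - Real.cos θ/2*Real.cos (2*x*θ))
    = 4*Real.sin θ^2*((x+1)*(Real.sin ((x+1)*θ) * Real.sin (x*θ))) := by
  have h1 : 2*(x+1)*θ = 2*(x*θ) + 2*θ := by ring
  have h2 : (x+1)*θ = x*θ + θ := by ring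
  have h3 : 2*x*θ = 2*(x*θ) := by ring
  have hpy := Real.sin_sq_add_cos_sq θ
  rw [h1, h2, h3, Real.sin_add, Real.cos_add, Real.sin_add, Real.sin_two_mul (x*θ),
    Real.sin_two_mul θ, cos2' (x*θ), cos2' θ]
  linear_combination (2*Real.sin θ*Real.sin (x*θ)*Real.cos (x*θ)) * hpy

theorem sum_n_sin_mul_sin_shift
    (N : ℕ) (hN : 1 ≤ N) (k : ℤ) (hk1 : 1 ≤ |k|) (hk2 : |k| ≤ (N : ℤ)) :
    ∑ n ∈ Finset.Icc 1 N,
        (n : ℝ) * (Real.sin ((n : ℝ) * (k : ℝ) * π / ((N : ℝ) + 1)) *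
          Real.sin (((n : ℝ) - 1) * (k : ℝ) * π / ((N : ℝ) + 1)))
      = ((N : ℝ) + 1) * ((N : ℝ) + 2) / 4 * Real.cos ((k : ℝ) * π / ((N : ℝ) + 1)) := by
  have hπ := Real.pi_pos
  set M : ℝ := (N : ℝ) + 1 with hMdef
  have hM : (0:ℝ) < M := by positivity
  set θ : ℝ := (k : ℝ) * π / M with hθ
  set s : ℝ := Real.sin θ with hsdef
  set c : ℝ := Real.cos θ with hcdef
  -- s ≠ 0
  have hs : s ≠ 0 := by
    intro h
    rw [hsdef, Real.sin_eq_zero_iff] at h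
    obtain ⟨m, hm⟩ := h
    have h1 : (m:ℝ)*π*M = (k:ℝ)*π := by
      rw [hm, hθ, div_mul_cancel₀ _ hM.ne']
    have h2 : ((m:ℝ)*M)*π = (k:ℝ)*π := by rw [← h1]; ring
    have hk : (m:ℝ)*M = (k:ℝ) := mul_right_cancel₀ hπ.ne' h2
    have hkZ : k = m * ((N : ℤ) + 1) := by
      have : ((m * ((N:ℤ)+1) : ℤ) : ℝ) = ((k : ℤ) : ℝ) := by push_cast; push_cast [hMdef] at hk; linarith
      exact_mod_cast this.symm
    rcases eq_or_ne m 0 with rfl | hm0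
    · simp at hkZ
      rw [hkZ] at hk1
      simp at hk1
    · have hm1 : 1 ≤ |m| := Int.one_le_abs hm0
      have : (N:ℤ) + 1 ≤ |k| := by
        rw [hkZ, abs_mul]
        have habs : |((N:ℤ)+1)| = (N:ℤ)+1 := abs_of_pos (by positivity)
        nlinarith [abs_nonneg m, abs_nonneg ((N:ℤ)+1)]
      linarith
  -- the antidifference
  set G : ℕ → ℝ := fun n =>
    c*s^2*(n:ℝ)*((n:ℝ)+1) - ((n:ℝ)+1/2)*s*Real.sin (2*(n:ℝ)*θ) - c/2*Real.cos (2*(n:ℝ)*θ)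
    with hG
  have harg : ∀ x : ℝ, x * (k : ℝ) * π / M = x * θ := by
    intro x; rw [hθ]; ring
  have key : ∀ i : ℕ,
      4*s^2 * (((1+i : ℕ) : ℝ) * (Real.sin (((1+i : ℕ) : ℝ) * (k:ℝ) * π / M) *
        Real.sin ((((1+i : ℕ) : ℝ) - 1) * (k:ℝ) * π / M))) = G (i+1) - G i := by
    intro i
    have h1 : ((1+i : ℕ) : ℝ) = (i:ℝ) + 1 := by push_cast; ring
    have h2 : (((i+1 : ℕ)) : ℝ) = (i:ℝ) + 1 := by push_cast; ring
    rw [h1, harg, show ((i:ℝ)+1-1) = (i:ℝ) by ring, harg, hG]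
    simp only [h2]
    rw [← step θ (i:ℝ)]
    ring
  have hsum : 4*s^2 * (∑ n ∈ Finset.Icc 1 N,
      (n : ℝ) * (Real.sin ((n : ℝ) * (k : ℝ) * π / M) *
        Real.sin (((n : ℝ) - 1) * (k : ℝ) * π / M))) = G N - G 0 := by
    rw [Finset.mul_sum, show Finset.Icc 1 N = Finset.Ico 1 (N+1) from (Finset.Ico_add_one_right_eq_Icc 1 N).symm,
      Finset.sum_Ico_eq_sum_range]
    simp only [Nat.add_sub_cancel]
    rw [Finset.sum_congr rfl (fun i _ => key i), Finset.sum_range_sub]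
  -- evaluate G N and G 0
  have h2N : 2*(N:ℝ)*θ = -(2*θ) + (k : ℤ) * (2*π) := by
    rw [hθ]; field_simp; ring
  have hsinN : Real.sin (2*(N:ℝ)*θ) = -(2*s*c) := by
    rw [h2N, Real.sin_add_int_mul_two_pi, Real.sin_neg, Real.sin_two_mul]
  have hcosN : Real.cos (2*(N:ℝ)*θ) = 1 - 2*s^2 := by
    rw [h2N, Real.cos_add_int_mul_two_pi, Real.cos_neg, cos2' θ]
  have hGN : G N - G 0 = 4*s^2 * (((N:ℝ)+1)*((N:ℝ)+2)/4 * c) := by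
    rw [hG]
    simp only [Nat.cast_zero]
    rw [hsinN, hcosN, show (2:ℝ)*0*θ = 0 by ring, Real.sin_zero, Real.cos_zero]
    ring
  have h4 : (4*s^2 : ℝ) ≠ 0 := by positivity
  apply mul_left_cancel₀ h4
  rw [hsum, hGN]
end

section
/- Let $N \geq 1$, fix $t \in (0, \pi)$ and $1 \leq k \leq N$, set $s_{nk} = \sin(nk\pi/(N+1))$, $\lambda = \sqrt{a^2 - 2c_k a + 1}$ with $a = 2\cos(t/2) $ and $c_k = \cos(k\pi/(N+1))$, and assume $\lambda > 0$. Define $\varphi_{2n} = \frac{(-1)^{n+1} s_{nk}}{\sqrt{N+1}}$ for $n \in \{1,\dots,N\}$ and $\varphi_{2n-1} = \frac{(-1)^{n+1}(2 s_{nk}\cos(t/2) - s_{(n-1)k})}{\sqrt{N+1}\,\lambda}$ for $n \in \{1,\dots,N+1\}$ (with $s_{(N+1)k}$ interpreted via the sine formula). Then the vector $\Phi = (\varphi_j)_{j=1}^{2N+1}$ has Euclidean norm $\|\Phi\| = 1$. -/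
open Real Finset

lemma key_cos_sum (S k : ℕ) (hk1 : 1 ≤ k) (hk2 : k < S) (r : ℝ) :
    ∑ m ∈ range S, Real.cos ((2 * (m : ℝ) + r) * ((k : ℝ) * π / (S : ℝ))) = 0 := by
  have hSpos : 0 < S := lt_of_le_of_lt (Nat.zero_le k) hk2
  have hS0 : (0:ℝ) < (S:ℝ) := by exact_mod_cast hSpos
  set θ : ℝ := (k : ℝ) * π / (S : ℝ) with hθ
  set x : ℂ := Complex.exp ((2 * θ : ℝ) * Complex.I) with hxdef
  have hxne : x ≠ 1 := by
    rw [hxdef, Ne, Complex.exp_eq_one_iff]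
    rintro ⟨n, hn⟩
    have hI : ((2 * θ : ℝ) : ℂ) = (n : ℂ) * (2 * (π : ℂ)) := by
      have := hn
      rw [show (n : ℂ) * (2 * (π:ℂ) * Complex.I) = ((n:ℂ) * (2 * (π:ℂ))) * Complex.I by ring] at this
      exact mul_right_cancel₀ Complex.I_ne_zero this
    have hre : (2 * θ : ℝ) = (n : ℝ) * (2 * π) := by exact_mod_cast hI
    have hk : (k : ℝ) = (n : ℝ) * (S : ℝ) := by
      rw [hθ] at hre
      have hπ : (0:ℝ) < π := Real.pi_pos
      field_simp at hre
      nlinarith [hre]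
    have hkZ : (k : ℤ) = n * (S : ℤ) := by exact_mod_cast hk
    have h1 : (1 : ℤ) ≤ (k : ℤ) := by exact_mod_cast hk1
    have h2 : (k : ℤ) < (S : ℤ) := by exact_mod_cast hk2
    have hSZ : (0:ℤ) < (S:ℤ) := by exact_mod_cast hSpos
    rcases lt_or_ge n 1 with hn1 | hn1
    · nlinarith
    · nlinarith
  have hxS : x ^ S = 1 := by
    rw [hxdef, ← Complex.exp_nat_mul]
    have : (S : ℂ) * (((2 * θ : ℝ)) * Complex.I) = (k : ℤ) * (2 * (π:ℂ) * Complex.I) := by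
      rw [hθ]
      push_cast
      have : (S : ℂ) ≠ 0 := by exact_mod_cast hS0.ne'
      field_simp
    rw [this, Complex.exp_int_mul_two_pi_mul_I]
  have hZ : ∑ m ∈ range S, x ^ m = 0 := by
    rw [geom_sum_eq hxne, hxS]
    simp
  have hC : ∑ m ∈ range S, Complex.exp (((2 * (m:ℝ) + r) * θ : ℝ) * Complex.I) = 0 := by
    have : ∀ m ∈ range S, Complex.exp (((2 * (m:ℝ) + r) * θ : ℝ) * Complex.I)
        = Complex.exp ((r * θ : ℝ) * Complex.I) * x ^ m := by
      intro m _
      rw [hxdef, ← Complex.exp_nat_mul, ← Complex.exp_add]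
      congr 1
      push_cast
      ring
    rw [Finset.sum_congr rfl this, ← Finset.mul_sum, hZ, mul_zero]
  have hterm : ∀ m ∈ range S, Real.cos ((2 * (m:ℝ) + r) * θ)
      = (Complex.exp (((2 * (m:ℝ) + r) * θ : ℝ) * Complex.I)).re := by
    intro m _
    rw [Complex.exp_ofReal_mul_I_re]
  rw [Finset.sum_congr rfl hterm, ← Complex.re_sum, hC, Complex.zero_re]

lemma sin_sq_sum (S k : ℕ) (hk1 : 1 ≤ k) (hk2 : k < S) :
    ∑ m ∈ range S, Real.sin ((m : ℝ) * ((k : ℝ) * π / (S : ℝ))) ^ 2 = (S : ℝ) / 2 := by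
  have h := key_cos_sum S k hk1 hk2 0
  set θ : ℝ := (k : ℝ) * π / (S : ℝ)
  have hterm : ∀ m ∈ range S, Real.sin ((m : ℝ) * θ) ^ 2
      = 1 / 2 - Real.cos ((2 * (m:ℝ) + 0) * θ) / 2 := by
    intro m _
    have h1 : Real.sin ((m:ℝ) * θ) ^ 2 = 1 - Real.cos ((m:ℝ)*θ) ^ 2 := Real.sin_sq _
    have h2 : Real.cos ((m:ℝ)*θ) ^ 2 = 1 / 2 + Real.cos (2 * ((m:ℝ)*θ)) / 2 := Real.cos_sq _
    rw [h1, h2, show (2 * (m:ℝ) + 0) * θ = 2 * ((m:ℝ)*θ) by ring]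
    ring
  rw [Finset.sum_congr rfl hterm, Finset.sum_sub_distrib, ← Finset.sum_div, ← Finset.sum_div, h]
  simp

lemma sin_S_eq_zero (S k : ℕ) (hS : 0 < S) :
    Real.sin ((S : ℝ) * ((k : ℝ) * π / (S : ℝ))) = 0 := by
  have hS0 : (S:ℝ) ≠ 0 := by positivity
  rw [show (S : ℝ) * ((k : ℝ) * π / (S : ℝ)) = (k:ℝ) * π by field_simp]
  exact Real.sin_nat_mul_pi k

lemma sin_sq_sum_shift (S k : ℕ) (hk1 : 1 ≤ k) (hk2 : k < S) :
    ∑ m ∈ range S, Real.sin (((m : ℝ) + 1) * ((k : ℝ) * π / (S : ℝ))) ^ 2 = (S : ℝ) / 2 := by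
  have hSpos : 0 < S := lt_of_le_of_lt (Nat.zero_le k) hk2
  set θ : ℝ := (k : ℝ) * π / (S : ℝ) with hθ
  have h1 : ∑ m ∈ range (S+1), Real.sin ((m : ℝ) * θ) ^ 2 = (S:ℝ)/2 := by
    rw [Finset.sum_range_succ, sin_sq_sum S k hk1 hk2, sin_S_eq_zero S k hSpos]
    norm_num
  rw [Finset.sum_range_succ'] at h1
  simp only [Nat.cast_add, Nat.cast_one, Nat.cast_zero, zero_mul, Real.sin_zero] at h1
  rw [← h1]
  norm_num

lemma sin_prod_sum (S k : ℕ) (hk1 : 1 ≤ k) (hk2 : k < S) :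
    ∑ m ∈ range S, Real.sin (((m : ℝ) + 1) * ((k : ℝ) * π / (S : ℝ)))
        * Real.sin ((m : ℝ) * ((k : ℝ) * π / (S : ℝ)))
      = (S : ℝ) / 2 * Real.cos ((k : ℝ) * π / (S : ℝ)) := by
  have h := key_cos_sum S k hk1 hk2 1
  set θ : ℝ := (k : ℝ) * π / (S : ℝ) with hθ
  have hterm : ∀ m ∈ range S, Real.sin (((m : ℝ) + 1) * θ) * Real.sin ((m : ℝ) * θ)
      = Real.cos θ / 2 - Real.cos ((2 * (m:ℝ) + 1) * θ) / 2 := by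
    intro m _
    have := Real.cos_sub_cos θ ((2 * (m:ℝ) + 1) * θ)
    have e1 : (θ + (2 * (m:ℝ) + 1) * θ) / 2 = ((m:ℝ) + 1) * θ := by ring
    have e2 : (θ - (2 * (m:ℝ) + 1) * θ) / 2 = -((m:ℝ) * θ) := by ring
    rw [e1, e2, Real.sin_neg] at this
    linarith
  rw [Finset.sum_congr rfl hterm, Finset.sum_sub_distrib, ← Finset.sum_div, ← Finset.sum_div, h,
    Finset.sum_const, Finset.card_range]
  simp
  ring

lemma neg_one_pow_sq (n : ℕ) : ((-1 : ℝ) ^ n) ^ 2 = 1 := by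
  rw [← pow_mul, mul_comm, pow_mul]
  norm_num

lemma sum_range_odd_split (f : ℕ → ℝ) (n : ℕ) :
    ∑ i ∈ range (2 * n + 1), f i
      = (∑ m ∈ range (n + 1), f (2 * m)) + ∑ m ∈ range n, f (2 * m + 1) := by
  induction n with
  | zero => simp
  | succ n ih =>
    rw [show 2 * (n + 1) + 1 = (2 * n + 1) + 1 + 1 by ring, Finset.sum_range_succ,
      Finset.sum_range_succ, ih, Finset.sum_range_succ, Finset.sum_range_succ,
      show 2 * n + 1 + 1 = 2 * (n + 1) by ring, Finset.sum_range_succ (fun m => f (2*m)),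
      Finset.sum_range_succ (fun m => f (2*m+1))]
    ring

/-- The eigenvector `Φ⁰ₖ(t)` of the unperturbed Jacobi matrix of the zigzag
nanoribbon is normalized. Indices of `Φ` are 0-based: 1-based position `j`
corresponds to index `j-1`; `Φ` at even 1-based `j = 2n` equals
`(-1)^(n+1) sin(nkπ/(N+1)) / √(N+1)` and at odd 1-based `j = 2n-1` equals
`(-1)^(n+1) (2 sin(nkπ/(N+1)) cos(t/2) - sin((n-1)kπ/(N+1))) / (√(N+1) λ)`. -/
theorem eigenvector_norm_one
    (N : ℕ) (hN : 1 ≤ N) (t : ℝ) (ht : t ∈ Set.Ioo 0 π)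
    (k : ℕ) (hk1 : 1 ≤ k) (hk2 : k ≤ N)
    (a c lam : ℝ)
    (ha : a = 2 * Real.cos (t / 2))
    (hc : c = Real.cos ((k : ℝ) * π / ((N : ℝ) + 1)))
    (hlam : lam = Real.sqrt (a ^ 2 - 2 * c * a + 1))
    (hlampos : 0 < lam)
    (Φ : Fin (2 * N + 1) → ℝ)
    (hΦ : ∀ i : Fin (2 * N + 1),
      Φ i =
        if Even ((i : ℕ) + 1) then
          -- even 1-based position 2n with n = (i+1)/2
          (-1 : ℝ) ^ (((i : ℕ) + 1) / 2 + 1) *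
            Real.sin (((((i : ℕ) + 1) / 2 : ℕ) : ℝ) * (k : ℝ) * π / ((N : ℝ) + 1)) /
            Real.sqrt ((N : ℝ) + 1)
        else
          -- odd 1-based position 2n-1 with n = i/2 + 1
          (-1 : ℝ) ^ ((i : ℕ) / 2 + 1 + 1) *
            (2 * Real.sin ((((i : ℕ) / 2 + 1 : ℕ) : ℝ) * (k : ℝ) * π / ((N : ℝ) + 1)) *
                Real.cos (t / 2) -
              Real.sin ((((i : ℕ) / 2 : ℕ) : ℝ) * (k : ℝ) * π / ((N : ℝ) + 1))) /
            (Real.sqrt ((N : ℝ) + 1) * lam)) :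
    ∑ i : Fin (2 * N + 1), Φ i ^ 2 = 1 := by
  have hkS : k < N + 1 := by omega
  have hS0 : (0:ℝ) < (N : ℝ) + 1 := by positivity
  have hsqrt : Real.sqrt ((N : ℝ) + 1) ^ 2 = (N : ℝ) + 1 := Real.sq_sqrt hS0.le
  have hc2 : c ^ 2 ≤ 1 := by rw [hc]; exact Real.cos_sq_le_one _
  have hrad : 0 ≤ a ^ 2 - 2 * c * a + 1 := by nlinarith [sq_nonneg (a - c)]
  have hlam2 : lam ^ 2 = a ^ 2 - 2 * c * a + 1 := by rw [hlam]; exact Real.sq_sqrt hrad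
  have hlam2pos : (0:ℝ) < lam ^ 2 := by positivity
  set θ : ℝ := (k : ℝ) * π / ((N : ℝ) + 1) with hθ
  -- the trig sums, specialized and cast
  have hsq := sin_sq_sum (N + 1) k hk1 hkS
  have hshift := sin_sq_sum_shift (N + 1) k hk1 hkS
  have hprod := sin_prod_sum (N + 1) k hk1 hkS
  have hsinS := sin_S_eq_zero (N + 1) k (Nat.succ_pos N)
  push_cast at hsq hshift hprod hsinS
  rw [← hθ] at hsq hshift hprod hsinS
  -- abbreviate the squared entries as a function of the natural index
  set g : ℕ → ℝ := fun j =>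
    (if Even (j + 1) then
        (-1 : ℝ) ^ ((j + 1) / 2 + 1) *
          Real.sin ((((j + 1) / 2 : ℕ) : ℝ) * (k : ℝ) * π / ((N : ℝ) + 1)) /
          Real.sqrt ((N : ℝ) + 1)
      else
        (-1 : ℝ) ^ (j / 2 + 1 + 1) *
          (2 * Real.sin (((j / 2 + 1 : ℕ) : ℝ) * (k : ℝ) * π / ((N : ℝ) + 1)) *
              Real.cos (t / 2) -
            Real.sin (((j / 2 : ℕ) : ℝ) * (k : ℝ) * π / ((N : ℝ) + 1))) /
          (Real.sqrt ((N : ℝ) + 1) * lam)) ^ 2 with hg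
  have hΦg : ∀ i : Fin (2 * N + 1), Φ i ^ 2 = g (i : ℕ) := by
    intro i
    rw [hΦ i, hg]
  rw [Finset.sum_congr rfl fun i _ => hΦg i, Fin.sum_univ_eq_sum_range g,
    sum_range_odd_split g N]
  -- odd 0-based indices (even 1-based positions)
  have heven : ∀ m ∈ range N, g (2 * m + 1)
      = Real.sin (((m : ℝ) + 1) * θ) ^ 2 / ((N : ℝ) + 1) := by
    intro m _
    have hE : Even (2 * m + 1 + 1) := ⟨m + 1, by ring⟩
    have hdiv : (2 * m + 1 + 1) / 2 = m + 1 := by omega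
    rw [hg]
    simp only [if_pos hE, hdiv]
    have harg : (((m + 1 : ℕ) : ℝ)) * (k : ℝ) * π / ((N : ℝ) + 1) = ((m : ℝ) + 1) * θ := by
      rw [hθ]; push_cast; ring
    rw [harg, div_pow, mul_pow, hsqrt, neg_one_pow_sq, one_mul]
  -- even 0-based indices (odd 1-based positions)
  have hodd : ∀ m ∈ range (N + 1), g (2 * m)
      = (a * Real.sin (((m : ℝ) + 1) * θ) - Real.sin ((m : ℝ) * θ)) ^ 2
          / (((N : ℝ) + 1) * lam ^ 2) := by
    intro m _
    have hE : ¬ Even (2 * m + 1) := by simp [Nat.even_add_one]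
    have hd1 : 2 * m / 2 = m := by omega
    rw [hg]
    simp only [if_neg hE, hd1]
    have harg1 : (((m + 1 : ℕ) : ℝ)) * (k : ℝ) * π / ((N : ℝ) + 1) = ((m : ℝ) + 1) * θ := by
      rw [hθ]; push_cast; ring
    have harg2 : (((m : ℕ) : ℝ)) * (k : ℝ) * π / ((N : ℝ) + 1) = (m : ℝ) * θ := by
      rw [hθ]; push_cast; ring
    rw [harg1, harg2, div_pow, mul_pow, neg_one_pow_sq, one_mul, mul_pow, hsqrt]
    rw [ha]
    ring
  rw [Finset.sum_congr rfl hodd, Finset.sum_congr rfl heven, ← Finset.sum_div,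
    ← Finset.sum_div]
  -- the shifted sine-square sum over `range N`
  have hA : ∑ m ∈ range N, Real.sin (((m : ℝ) + 1) * θ) ^ 2 = ((N : ℝ) + 1) / 2 := by
    have := hshift
    rw [Finset.sum_range_succ] at this
    have hz : Real.sin (((N : ℝ) + 1) * θ) = 0 := by
      rw [← hsinS]
    rw [hz] at this
    simpa using this
  -- the numerator sum for the odd positions
  have hB : ∑ m ∈ range (N + 1),
      (a * Real.sin (((m : ℝ) + 1) * θ) - Real.sin ((m : ℝ) * θ)) ^ 2
        = ((N : ℝ) + 1) / 2 * lam ^ 2 := by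
    have expand : ∀ m ∈ range (N + 1),
        (a * Real.sin (((m : ℝ) + 1) * θ) - Real.sin ((m : ℝ) * θ)) ^ 2
          = a ^ 2 * Real.sin (((m : ℝ) + 1) * θ) ^ 2
            - 2 * a * (Real.sin (((m : ℝ) + 1) * θ) * Real.sin ((m : ℝ) * θ))
            + Real.sin ((m : ℝ) * θ) ^ 2 := by
      intro m _
      ring
    rw [Finset.sum_congr rfl expand, Finset.sum_add_distrib, Finset.sum_sub_distrib,
      ← Finset.mul_sum, ← Finset.mul_sum, hshift, hprod, hsq, ← hc, hlam2]
    ring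
  rw [hA, hB]
  field_simp
  ring
end
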